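/- Let M be a loopless matroid of rank r ≥ 2 on a finite ground set E. Then in A*(M) one has the identity (1 + S_{r−1,M})·(1 + α − S_{1,M} − ⋯ − S_{r−1,M}) = 1 + α − S_{1,M} − ⋯ − S_{r−2,M}. -/

import Mathlib

open scoped Classical
open MvPolynomial

namespace ChowPaper

variable {α : Type*}

/-- A matroid is loopless if every element of the ground set is independent as a singleton. -/
def Loopless (M : Matroid α) : Prop := ∀ a ∈ M.E, M.Indep ({a} : Set α)

/-- The (natural-number) rank of a set in a matroid: the supremum of the cardinalities of
independent subsets. -/
noncomputable def rkN (M : Matroid α) (X : Set α) : ℕ :=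
  sSup {n : ℕ | ∃ I, M.Indep I ∧ I ⊆ X ∧ I.ncard = n}

/-- Nonempty proper flats of a matroid. -/
def PFlat (M : Matroid α) (F : Set α) : Prop := M.IsFlat F ∧ F.Nonempty ∧ F ≠ M.E

/-- The index type of variables of the Chow ring: nonempty proper flats. -/
def FlatIdx (M : Matroid α) := {F : Set α // PFlat M F}

variable (R : Type*) [CommRing R]

/-- The polynomial ring `R[x_F : F a nonempty proper flat]`. -/
abbrev Pre (M : Matroid α) := MvPolynomial (FlatIdx M) R

/-- The linear form `∑_{F ∋ i} x_F`. -/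
noncomputable def alphaPre (M : Matroid α) (i : α) : Pre R M :=
  ∑ᶠ F : FlatIdx M, if i ∈ F.1 then X F else 0

/-- The linear form `∑_{F ∌ i} x_F`. -/
noncomputable def betaPre (M : Matroid α) (i : α) : Pre R M :=
  ∑ᶠ F : FlatIdx M, if i ∉ F.1 then X F else 0

/-- The defining ideal of the Chow ring of a matroid:  generated by products `x_F x_G` for
incomparable flats, and the differences `(∑_{F ∋ i} x_F) - (∑_{F ∋ j} x_F)` for `i j` in the
ground set. -/
noncomputable def chowIdeal (M : Matroid α) : Ideal (Pre R M) :=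
  Ideal.span ({p | ∃ F G : FlatIdx M, ¬ F.1 ⊆ G.1 ∧ ¬ G.1 ⊆ F.1 ∧ p = X F * X G} ∪
    {p | ∃ i ∈ M.E, ∃ j ∈ M.E, p = alphaPre R M i - alphaPre R M j})

/-- The Chow ring of a matroid. -/
abbrev Chow (M : Matroid α) := Pre R M ⧸ chowIdeal R M

/-- The quotient map onto the Chow ring. -/
noncomputable def cmk (M : Matroid α) : Pre R M →+* Chow R M :=
  Ideal.Quotient.mk (chowIdeal R M)

/-- The class `x_F` of a nonempty proper flat in the Chow ring. -/
noncomputable def xcls (M : Matroid α) (F : FlatIdx M) : Chow R M := cmk R M (X F)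

/-- The class `x_F` for any set, with the convention that `x_F = 1` when `F` is not a nonempty
proper flat (in particular `x_∅ = x_E = 1`). -/
noncomputable def xv (M : Matroid α) (F : Set α) : Chow R M :=
  if h : PFlat M F then xcls R M ⟨F, h⟩ else 1

/-- The class `α = ∑_{F ∋ i} x_F` in the Chow ring. -/
noncomputable def alpha (M : Matroid α) (i : α) : Chow R M := cmk R M (alphaPre R M i)

/-- The class `β = ∑_{F ∌ i} x_F` in the Chow ring. -/
noncomputable def beta (M : Matroid α) (i : α) : Chow R M := cmk R M (betaPre R M i)

/-- The class `α_S = α - ∑_{S ⊆ F} x_F`. -/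
noncomputable def alphaS (M : Matroid α) (i : α) (S : Set α) : Chow R M :=
  alpha R M i - cmk R M (∑ᶠ F : FlatIdx M, if S ⊆ F.1 then X F else 0)

/-- The class `β_S = β - ∑_{F ⊆ E \ S} x_F`. -/
noncomputable def betaS (M : Matroid α) (i : α) (S : Set α) : Chow R M :=
  beta R M i - cmk R M (∑ᶠ F : FlatIdx M, if F.1 ⊆ M.E \ S then X F else 0)

/-- The sum of the classes of all flats of a given rank `n`. -/
noncomputable def flatsOfRank (M : Matroid α) (n : ℕ) : Chow R M :=
  cmk R M (∑ᶠ F : FlatIdx M, if rkN M F.1 = n then X F else 0)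

/-- The degree-1 class with coefficients `c`, i.e. `∑_F c_F x_F`. -/
noncomputable def lin (M : Matroid α) (c : FlatIdx M → R) : Chow R M :=
  cmk R M (∑ᶠ F : FlatIdx M, MvPolynomial.C (c F) * X F)

/-- `deg` is a degree map for a rank-`r` matroid if it is linear and sends the monomial of every
complete flag `F_1 ⊊ ⋯ ⊊ F_{r-1}` of nonempty proper flats to `1`.  (By Adiprasito–Huh–Katz such
a map exists and its values on the degree-`(r-1)` part of the Chow ring are uniquely
determined.) -/
def IsDegMap (M : Matroid α) (r : ℕ) (deg : Chow R M →ₗ[R] R) : Prop :=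
  ∀ G : Fin (r - 1) → FlatIdx M, (StrictMono fun t => (G t).1) →
    deg (cmk R M (∏ t, X (G t))) = 1

/-- A finite set of subsets is a flag of (nonempty proper) flats if all members are nonempty
proper flats and they are pairwise comparable. -/
def IsFlagF (M : Matroid α) (S : Finset (Set α)) : Prop :=
  (∀ F ∈ S, PFlat M F) ∧ ∀ F ∈ S, ∀ G ∈ S, F ⊆ G ∨ G ⊆ F

/-- A finite set of nonempty proper flats is a flag if its members are pairwise comparable. -/
def IsFlagIdx (M : Matroid α) (S : Finset (FlatIdx M)) : Prop :=
  ∀ F ∈ S, ∀ G ∈ S, F.1 ⊆ G.1 ∨ G.1 ⊆ F.1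

/-- `N_I`: the number of flags of nonempty proper flats whose set of ranks is exactly `I`. -/
noncomputable def Ncount (M : Matroid α) (I : Finset ℕ) : ℕ :=
  {S : Finset (Set α) | IsFlagF M S ∧ S.image (rkN M) = I}.ncard

/-- `N_{I,s}`: the number of flags of nonempty proper flats with rank set `I` none of whose
members contains `s` (equivalently, whose maximal member does not contain `s`). -/
noncomputable def NcountS (M : Matroid α) (I : Finset ℕ) (s : α) : ℕ :=
  {S : Finset (Set α) | IsFlagF M S ∧ S.image (rkN M) = I ∧ ∀ F ∈ S, s ∉ F}.ncard

/-- Combinatorial nefness (property (P3)): for every flag there is a representation with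
coefficients vanishing on the flag and nonnegative on every flat that can be inserted into the
flag. -/
def CombNef (M : Matroid α) (ℓ : Chow ℝ M) : Prop :=
  ∀ S : Finset (FlatIdx M), IsFlagIdx M S →
    ∃ c : FlatIdx M → ℝ, ℓ = lin ℝ M c ∧ (∀ F ∈ S, c F = 0) ∧
      ∀ F : FlatIdx M, F ∉ S → (∀ G ∈ S, F.1 ⊆ G.1 ∨ G.1 ⊆ F.1) → 0 ≤ c F

/-- Combinatorial ampleness: as nefness, with strictly positive coefficients on insertable
flats. -/
def CombAmple (M : Matroid α) (ℓ : Chow ℝ M) : Prop :=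
  ∀ S : Finset (FlatIdx M), IsFlagIdx M S →
    ∃ c : FlatIdx M → ℝ, ℓ = lin ℝ M c ∧ (∀ F ∈ S, c F = 0) ∧
      ∀ F : FlatIdx M, F ∉ S → (∀ G ∈ S, F.1 ⊆ G.1 ∨ G.1 ⊆ F.1) → 0 < c F

/-- Property (P2): for every flag there is a representation with coefficients vanishing on the
flag and nonnegative on all nonempty proper flats. -/
def P2 (M : Matroid α) (ℓ : Chow ℝ M) : Prop :=
  ∀ S : Finset (FlatIdx M), IsFlagIdx M S →
    ∃ c : FlatIdx M → ℝ, ℓ = lin ℝ M c ∧ (∀ F ∈ S, c F = 0) ∧ ∀ F : FlatIdx M, 0 ≤ c F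

/-- The fake effective cone: classes with nonnegative degree against every product of `r - 2`
combinatorially nef classes. -/
noncomputable def FakeEff (M : Matroid α) (r : ℕ) (deg : Chow ℝ M →ₗ[ℝ] ℝ) : Set (Chow ℝ M) :=
  {D | ∀ L : Fin (r - 2) → Chow ℝ M, (∀ t, CombNef M (L t)) → 0 ≤ deg (D * ∏ t, L t)}

/-- The matroid base polytope, as a subset of `α → ℝ`: the convex hull of the indicator
vectors of the bases. -/
noncomputable def polytope (M : Matroid α) : Set (α → ℝ) :=
  convexHull ℝ {x | ∃ B, M.IsBase B ∧ x = B.indicator 1}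

/-- The flag-counting function `N̂_{𝓕,I}` of Theorem 6.2: the number of flags of nonempty proper
flats with rank set `I`, disjoint from `𝓕` and forming a flag of flats together with `𝓕`,
provided every member of `𝓕` is a flat; and `0` otherwise. -/
noncomputable def Nhat (M : Matroid α) (Fl : Finset (Set α)) (I : Finset ℕ) : ℤ :=
  if ∀ F ∈ Fl, M.IsFlat F then
    ({G : Finset (Set α) | IsFlagF M G ∧ G.image (rkN M) = I ∧ Disjoint G Fl ∧
      IsFlagF M (G ∪ Fl)}).ncard
  else 0


section Aux2
variable {M : Matroid α}

lemma PFlat.subset_ground' {F : Set α} (h : PFlat M F) : F ⊆ M.E := h.1.subset_ground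

lemma flatIdx_finite (hfin : M.E.Finite) : Finite (FlatIdx M) := by
  haveI := hfin.finite_subsets.to_subtype
  exact Finite.of_injective
    (fun F : FlatIdx M => (⟨F.1, F.2.subset_ground'⟩ : {b : Set α | b ⊆ M.E}))
    (fun F G h => Subtype.ext (Subtype.mk_eq_mk.mp h))

lemma rk_bddAbove (hfin : M.E.Finite) (X : Set α) :
    BddAbove {n : ℕ | ∃ I, M.Indep I ∧ I ⊆ X ∧ I.ncard = n} := by
  refine ⟨M.E.ncard, fun n hn => ?_⟩
  obtain ⟨I, hI, -, rfl⟩ := hn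
  exact Set.ncard_le_ncard hI.subset_ground hfin

lemma le_rkN (hfin : M.E.Finite) {X I : Set α} (hI : M.Indep I) (hIX : I ⊆ X) :
    I.ncard ≤ rkN M X :=
  le_csSup (rk_bddAbove hfin X) ⟨I, hI, hIX, rfl⟩

lemma rkN_le {X : Set α} {m : ℕ}
    (h : ∀ I, M.Indep I → I ⊆ X → I.ncard ≤ m) : rkN M X ≤ m :=
  csSup_le ⟨0, ∅, M.empty_indep, Set.empty_subset X, Set.ncard_empty α⟩
    (fun n hn => by obtain ⟨I, hI, hIX, rfl⟩ := hn; exact h I hI hIX)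

lemma one_le_rkN_flat (hfin : M.E.Finite) (hloop : Loopless M) {F : Set α}
    (hF : PFlat M F) : 1 ≤ rkN M F := by
  obtain ⟨a, ha⟩ := hF.2.1
  have := le_rkN hfin (hloop a (hF.subset_ground' ha)) (Set.singleton_subset_iff.2 ha)
  simpa using this

lemma rkN_proper_flat_le (hfin : M.E.Finite) {F : Set α} (hF : PFlat M F)
    {r : ℕ} (hr : rkN M M.E = r) : rkN M F ≤ r - 1 := by
  refine rkN_le fun I hI hIF => ?_
  by_contra hlt
  have hIE : I ⊆ M.E := hI.subset_ground
  have h1 : I.ncard ≤ r := hr ▸ le_rkN hfin hI hIE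
  have hEcl : M.E ⊆ M.closure I := by
    intro e he
    by_contra hecl
    have heI : e ∉ I := fun h => hecl (M.subset_closure I hIE h)
    have hind : M.Indep (insert e I) := by
      rw [hI.insert_indep_iff_of_notMem heI]; exact ⟨he, hecl⟩
    have h2 : (insert e I).ncard ≤ r := hr ▸ le_rkN hfin hind hind.subset_ground
    rw [Set.ncard_insert_of_notMem heI (hfin.subset hIE)] at h2
    omega
  have hclF : M.closure I ⊆ F := hF.1.closure ▸ M.closure_subset_closure hIF
  exact hF.2.2 ((hF.subset_ground').antisymm (hEcl.trans hclF))

lemma flat_eq_of_subset_rk_one (hfin : M.E.Finite) (hloop : Loopless M)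
    {F G : Set α} (hF : M.IsFlat F) (hFne : F.Nonempty) (hG : PFlat M G)
    (hFG : F ⊆ G) (hG1 : rkN M G = 1) : F = G := by
  obtain ⟨a, ha⟩ := hFne
  have haE : a ∈ M.E := hG.subset_ground' (hFG ha)
  have hGa : G ⊆ M.closure {a} := by
    intro b hb
    by_contra hbcl
    have hba : b ∉ ({a} : Set α) := by
      intro h
      rw [Set.mem_singleton_iff] at h
      rw [h] at hbcl
      exact hbcl (M.subset_closure {a} (by simpa using haE) (Set.mem_singleton a))
    have hind : M.Indep (insert b {a}) := by
      rw [(hloop a haE).insert_indep_iff_of_notMem hba]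
      exact ⟨hG.subset_ground' hb, hbcl⟩
    have hsub : insert b {a} ⊆ G := by
      intro x hx
      simp only [Set.mem_insert_iff, Set.mem_singleton_iff] at hx
      rcases hx with rfl | rfl
      · exact hb
      · exact hFG ha
    have h2 := le_rkN hfin hind hsub
    rw [Set.ncard_insert_of_notMem hba (Set.finite_singleton a),
      Set.ncard_singleton, hG1] at h2
    omega
  exact hFG.antisymm
    (hGa.trans (hF.closure ▸ M.closure_subset_closure (Set.singleton_subset_iff.2 ha)))

end Aux2

section Alg
variable {M : Matroid α}

lemma alpha_add_beta_pre (M : Matroid α) (i : α) [Fintype (FlatIdx M)] :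
    alphaPre ℤ M i + betaPre ℤ M i = ∑ F : FlatIdx M, X F := by
  rw [alphaPre, betaPre, finsum_eq_sum_of_fintype, finsum_eq_sum_of_fintype,
    ← Finset.sum_add_distrib]
  refine Finset.sum_congr rfl fun F _ => ?_
  by_cases h : i ∈ F.1 <;> simp [h]

lemma xmul_mem (M : Matroid α) {F G : FlatIdx M} (h1 : ¬ F.1 ⊆ G.1) (h2 : ¬ G.1 ⊆ F.1) :
    (X F * X G : Pre ℤ M) ∈ chowIdeal ℤ M :=
  Ideal.subset_span (Or.inl ⟨F, G, h1, h2, rfl⟩)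

lemma alpha_sub_mem (M : Matroid α) {i j : α} (hi : i ∈ M.E) (hj : j ∈ M.E) :
    (alphaPre ℤ M i - alphaPre ℤ M j) ∈ chowIdeal ℤ M :=
  Ideal.subset_span (Or.inr ⟨i, hi, j, hj, rfl⟩)

lemma beta_eq (M : Matroid α) [Fintype (FlatIdx M)] {i j : α} (hi : i ∈ M.E) (hj : j ∈ M.E) :
    beta ℤ M i = beta ℤ M j := by
  have h : betaPre ℤ M i - betaPre ℤ M j = alphaPre ℤ M j - alphaPre ℤ M i := by
    have h1 := alpha_add_beta_pre M i
    have h2 := alpha_add_beta_pre M j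
    linear_combination h1 - h2
  have h0 : cmk ℤ M (betaPre ℤ M i - betaPre ℤ M j) = 0 := by
    rw [h]
    exact Ideal.Quotient.eq_zero_iff_mem.2 (alpha_sub_mem M hj hi)
  rw [map_sub] at h0
  exact sub_eq_zero.1 h0

lemma xcls_mul_beta (hfin : M.E.Finite) (hloop : Loopless M) [Fintype (FlatIdx M)]
    {F : FlatIdx M} (h1 : rkN M F.1 = 1) {j : α} (hj : j ∈ F.1) :
    xcls ℤ M F * beta ℤ M j = 0 := by
  rw [xcls, beta, ← map_mul, betaPre, finsum_eq_sum_of_fintype, Finset.mul_sum, map_sum]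
  refine Finset.sum_eq_zero fun G _ => ?_
  by_cases hjG : j ∈ G.1
  · rw [if_neg (not_not_intro hjG), mul_zero, map_zero]
  · rw [if_pos hjG]
    refine Ideal.Quotient.eq_zero_iff_mem.2 (xmul_mem M ?_ ?_)
    · exact fun hFG => hjG (hFG hj)
    · intro hGF
      have hgf : G.1 = F.1 := flat_eq_of_subset_rk_one hfin hloop G.2.1 G.2.2.1 F.2 hGF h1
      exact hjG (by rw [hgf]; exact hj)

lemma sum_flatsOfRank (hfin : M.E.Finite) (hloop : Loopless M) [Fintype (FlatIdx M)]
    {r : ℕ} (hr2 : 2 ≤ r) (hr : rkN M M.E = r) :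
    ∑ k ∈ Finset.Icc 1 (r - 1), flatsOfRank ℤ M (r - k)
      = cmk ℤ M (∑ F : FlatIdx M, X F) := by
  simp only [flatsOfRank, finsum_eq_sum_of_fintype, ← map_sum]
  congr 1
  rw [Finset.sum_comm]
  refine Finset.sum_congr rfl fun F _ => ?_
  have h1 : 1 ≤ rkN M F.1 := one_le_rkN_flat hfin hloop F.2
  have h2 : rkN M F.1 ≤ r - 1 := rkN_proper_flat_le hfin F.2 hr
  have key := Finset.sum_eq_single_of_mem (s := Finset.Icc 1 (r - 1))
    (f := fun k => if rkN M F.1 = r - k then (X F : Pre ℤ M) else 0) (r - rkN M F.1)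
    (by simp only [Finset.mem_Icc]; omega)
    (fun k hk hne => by
      simp only [Finset.mem_Icc] at hk
      exact if_neg (fun h => hne (by omega)))
  rw [key]
  exact if_pos (by omega)

end Alg


/-- The identity `(1 + S_{r-1,M})·(1 + α - S_{1,M} - ⋯ - S_{r-1,M})
 = 1 + α - S_{1,M} - ⋯ - S_{r-2,M}` in the Chow ring, where `S_{k,M}` is the sum of the
classes of the flats of rank `r - k`. -/
theorem stmt8 (M : Matroid α) (hfin : M.E.Finite) (hloop : Loopless M)
    (r : ℕ) (hr2 : 2 ≤ r) (hr : rkN M M.E = r) (i : α) (hi : i ∈ M.E) :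
    (1 + flatsOfRank ℤ M (r - (r - 1))) *
      (1 + alpha ℤ M i - ∑ k ∈ Finset.Icc 1 (r - 1), flatsOfRank ℤ M (r - k))
    = 1 + alpha ℤ M i - ∑ k ∈ Finset.Icc 1 (r - 2), flatsOfRank ℤ M (r - k) := by
  haveI : Finite (FlatIdx M) := flatIdx_finite hfin
  haveI : Fintype (FlatIdx M) := Fintype.ofFinite _
  have hsplit : Finset.Icc 1 (r - 1) = insert (r - 1) (Finset.Icc 1 (r - 2)) := by
    ext k; simp only [Finset.mem_insert, Finset.mem_Icc]; omega
  have hnotmem : r - 1 ∉ Finset.Icc 1 (r - 2) := by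
    simp only [Finset.mem_Icc]; omega
  set P := cmk ℤ M (∑ F : FlatIdx M, X F) with hP
  set A := ∑ k ∈ Finset.Icc 1 (r - 2), flatsOfRank ℤ M (r - k) with hA
  set T := flatsOfRank ℤ M (r - (r - 1)) with hT
  have hIcc : ∑ k ∈ Finset.Icc 1 (r - 1), flatsOfRank ℤ M (r - k) = T + A := by
    rw [hsplit, Finset.sum_insert hnotmem]
  have hsum : T + A = P := by
    rw [← hIcc, sum_flatsOfRank hfin hloop hr2 hr]
  have halpha : alpha ℤ M i = P - beta ℤ M i := by
    have h := congrArg (cmk ℤ M) (alpha_add_beta_pre M i)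
    rw [map_add] at h
    rw [alpha, eq_sub_iff_add_eq]
    exact h
  have hTbeta : T * beta ℤ M i = 0 := by
    have hT1 : T = ∑ F : FlatIdx M, if rkN M F.1 = 1 then xcls ℤ M F else 0 := by
      rw [hT, show r - (r - 1) = 1 by omega, flatsOfRank, finsum_eq_sum_of_fintype, map_sum]
      exact Finset.sum_congr rfl fun F _ => by split <;> simp [xcls]
    rw [hT1, Finset.sum_mul]
    refine Finset.sum_eq_zero fun F _ => ?_
    by_cases h1 : rkN M F.1 = 1
    · rw [if_pos h1]
      obtain ⟨j, hj⟩ := F.2.2.1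
      rw [beta_eq M hi (F.2.subset_ground' hj)]
      exact xcls_mul_beta hfin hloop h1 hj
    · simp [h1]
  rw [hIcc, halpha, ← hsum]
  ring_nf
  linear_combination -hTbeta


end ChowPaper
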